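/- arXiv:0802.1100 — 2 statements merged into one kernel-verified Lean document; each statement's English description precedes it below -/
import Mathlib

section
/- Let A₁ ∈ U_1. Then there exist symmetric matrices A₂, ..., A_m ∈ U_1 with A₁ + A₂ + ... + A_m = E (the all-ones matrix) such that the quadratic stochastic operator V with coefficients p_{ij,k} = (A_k)_{ij} is doubly stochastic. -/
/-- Sum of the `k` largest entries of `x`, as a supremum over `k`-element subsets. -/
noncomputable def maxSum (m : ℕ) (x : Fin m → ℝ) (k : ℕ) : ℝ :=
  sSup {r : ℝ | ∃ s : Finset (Fin m), s.card = k ∧ r = ∑ i ∈ s, x i}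

/-- `x ≺ y` : `x` is majorized by `y`. -/
def IsMajorizedBy (m : ℕ) (x y : Fin m → ℝ) : Prop :=
  ∀ k : ℕ, 1 ≤ k → k ≤ m - 1 → maxSum m x k ≤ maxSum m y k

/-- Conditions on the coefficients of a quadratic stochastic operator. -/
def QSOCoeffs (m : ℕ) (p : Fin m → Fin m → Fin m → ℝ) : Prop :=
  (∀ i j k, p i j k = p j i k) ∧ (∀ i j k, 0 ≤ p i j k) ∧ (∀ i j, ∑ k, p i j k = 1)

/-- The quadratic map determined by the coefficients. -/
def QSOMap (m : ℕ) (p : Fin m → Fin m → Fin m → ℝ) (x : Fin m → ℝ) : Fin m → ℝ :=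
  fun k => ∑ i, ∑ j, p i j k * x i * x j

/-- A doubly stochastic quadratic operator: `V x ≺ x` for all `x` in the simplex. -/
def IsDSQO (m : ℕ) (p : Fin m → Fin m → Fin m → ℝ) : Prop :=
  QSOCoeffs m p ∧ ∀ x ∈ stdSimplex ℝ (Fin m), IsMajorizedBy m (QSOMap m p x) x

/-- The set `U_1` of symmetric nonnegative matrices with all principal-block sums
bounded by the block size and total sum `m`. -/
def U1 (m : ℕ) : Set (Matrix (Fin m) (Fin m) ℝ) :=
  {A | A.IsSymm ∧ (∀ i j, 0 ≤ A i j) ∧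
    (∀ α : Finset (Fin m), ∑ i ∈ α, ∑ j ∈ α, A i j ≤ (α.card : ℝ)) ∧
    (∑ i, ∑ j, A i j = (m : ℝ))}

/-- The all-ones matrix `E`. -/
def Ematrix (m : ℕ) : Matrix (Fin m) (Fin m) ℝ := Matrix.of fun _ _ => 1


/-!
Take `A_k = (E - A₁) / (m - 1)` for every `k ≥ 2`: this matrix lies in `U_1` and the family sums
to `E`. Put `t = xᵀ A₁ x` and let `S_k` be the sum of the `k` largest entries of `x`. Over a
`k`-set of indices the entries of `V x` sum to `t + (k - 1)(1 - t)/(m - 1)` or to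
`k (1 - t)/(m - 1)`, according as the set contains the index `1` or not, so majorization reduces
to `(m - k) t + k - 1 ≤ (m - 1) S_k` and `k (1 - t) ≤ (m - 1) S_k`.

Write `x = ∑ d_r 𝟙_{α_r}` as a layer cake over the nested sets `α_r` of its `r` largest
entries, with `d ≥ 0`. Both sides of the first estimate become quadratic forms in `d`, and the
estimate holds coefficientwise by the block bounds `2 A(α, β) ≤ |α| + |β|` for `α ⊆ β` and
`A(α, β) ≤ |α| |β|`. The second estimate follows from `xᵀ A x ≥ min x`, which holds because every
row sum of a matrix in `U_1` is at least `1/2`.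
-/

open Finset

section MatrixSums

variable {n : Type*}

-- `QSOMap m (fun i j k => A k i j) x k` unfolds to `quadForm (A k) x`.
def quadForm [Fintype n] (M : Matrix n n ℝ) (x : n → ℝ) : ℝ :=
  ∑ i, ∑ j, M i j * x i * x j

def blockSum (M : Matrix n n ℝ) (α β : Finset n) : ℝ :=
  ∑ i ∈ α, ∑ j ∈ β, M i j

section QuadForm

variable [Fintype n]

lemma quadForm_sum {ι : Type*} (s : Finset ι) (M : ι → Matrix n n ℝ) (x : n → ℝ) :
    quadForm (∑ l ∈ s, M l : Matrix n n ℝ) x = ∑ l ∈ s, quadForm (M l) x := by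
  simp only [quadForm, Matrix.sum_apply, sum_mul]
  rw [sum_comm (s := s)]
  exact sum_congr rfl fun i _ => sum_comm

lemma quadForm_add (M N : Matrix n n ℝ) (x : n → ℝ) :
    quadForm (M + N) x = quadForm M x + quadForm N x := by
  simp only [quadForm, Matrix.add_apply, add_mul, sum_add_distrib]

lemma quadForm_smul (c : ℝ) (M : Matrix n n ℝ) (x : n → ℝ) :
    quadForm (c • M) x = c * quadForm M x := by
  simp only [quadForm, Matrix.smul_apply, smul_eq_mul, mul_sum, mul_assoc]

lemma quadForm_sub (M N : Matrix n n ℝ) (x : n → ℝ) :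
    quadForm (M - N) x = quadForm M x - quadForm N x := by
  simp only [quadForm, Matrix.sub_apply, sub_mul, sum_sub_distrib]

lemma quadForm_of_one (x : n → ℝ) : quadForm (Matrix.of fun _ _ => (1 : ℝ)) x = (∑ i, x i) ^ 2 := by
  simp only [quadForm, Matrix.of_apply, one_mul, sq, sum_mul_sum]

end QuadForm

lemma blockSum_sub (M N : Matrix n n ℝ) (α β : Finset n) :
    blockSum (M - N) α β = blockSum M α β - blockSum N α β := by
  simp only [blockSum, Matrix.sub_apply, sum_sub_distrib]

lemma blockSum_smul (c : ℝ) (M : Matrix n n ℝ) (α β : Finset n) :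
    blockSum (c • M) α β = c * blockSum M α β := by
  simp only [blockSum, Matrix.smul_apply, smul_eq_mul, mul_sum]

lemma blockSum_of_one (α β : Finset n) :
    blockSum (Matrix.of fun _ _ => (1 : ℝ)) α β = #α * #β := by
  simp [blockSum]

lemma blockSum_mono_right {M : Matrix n n ℝ} (hM : ∀ i j, 0 ≤ M i j) (α : Finset n)
    {β γ : Finset n} (h : β ⊆ γ) : blockSum M α β ≤ blockSum M α γ :=
  sum_le_sum fun i _ => sum_le_sum_of_subset_of_nonneg h fun j _ _ => hM i j

variable [DecidableEq n]

lemma blockSum_sdiff_left (M : Matrix n n ℝ) {α β : Finset n} (h : α ⊆ β) (γ : Finset n) :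
    blockSum M β γ = blockSum M (β \ α) γ + blockSum M α γ :=
  (sum_sdiff h).symm

lemma blockSum_sdiff_right (M : Matrix n n ℝ) {α β : Finset n} (h : α ⊆ β) (γ : Finset n) :
    blockSum M γ β = blockSum M γ (β \ α) + blockSum M γ α := by
  simp only [blockSum, ← sum_add_distrib, sum_sdiff h]

end MatrixSums

namespace U1

variable {m : ℕ} {A : Matrix (Fin m) (Fin m) ℝ}

lemma apply_comm (hA : A ∈ U1 m) (i j : Fin m) : A i j = A j i :=
  hA.1.apply j i

lemma apply_nonneg (hA : A ∈ U1 m) (i j : Fin m) : 0 ≤ A i j :=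
  hA.2.1 i j

lemma blockSum_self_le_card (hA : A ∈ U1 m) (α : Finset (Fin m)) : blockSum A α α ≤ #α :=
  hA.2.2.1 α

lemma blockSum_univ (hA : A ∈ U1 m) : blockSum A univ univ = m :=
  hA.2.2.2

lemma apply_le_one (hA : A ∈ U1 m) (i j : Fin m) : A i j ≤ 1 := by
  obtain rfl | hij := eq_or_ne i j
  · simpa [blockSum] using blockSum_self_le_card hA {i}
  · have h := blockSum_self_le_card hA {i, j}
    simp only [blockSum, sum_pair hij, card_pair hij, Nat.cast_ofNat] at h
    linarith [apply_comm hA i j, apply_nonneg hA i i, apply_nonneg hA j j]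

lemma blockSum_nonneg (hA : A ∈ U1 m) (α β : Finset (Fin m)) : 0 ≤ blockSum A α β :=
  sum_nonneg fun i _ => sum_nonneg fun j _ => apply_nonneg hA i j

lemma blockSum_comm (hA : A ∈ U1 m) (α β : Finset (Fin m)) :
    blockSum A α β = blockSum A β α :=
  sum_comm.trans <| sum_congr rfl fun _ _ => sum_congr rfl fun _ _ => apply_comm hA _ _

lemma blockSum_le_card_mul (hA : A ∈ U1 m) (α β : Finset (Fin m)) :
    blockSum A α β ≤ #α * #β := by
  simpa [blockSum] using sum_le_sum fun i (_ : i ∈ α) =>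
    sum_le_sum fun j (_ : j ∈ β) => apply_le_one hA i j

lemma two_mul_blockSum_le (hA : A ∈ U1 m) {α β : Finset (Fin m)} (h : α ⊆ β) :
    2 * blockSum A α β ≤ #α + #β := by
  have hβ := blockSum_sdiff_left A h β
  rw [blockSum_sdiff_right A h (β \ α), blockSum_comm hA (β \ α) α] at hβ
  have hαβ := blockSum_sdiff_right A h α
  linarith [blockSum_nonneg hA (β \ α) (β \ α), blockSum_self_le_card hA α,
    blockSum_self_le_card hA β]

lemma one_le_two_mul_rowSum (hA : A ∈ U1 m) (i : Fin m) : 1 ≤ 2 * ∑ j, A i j := by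
  have hi : {i} ⊆ univ := subset_univ _
  have huniv := blockSum_sdiff_left A hi univ
  rw [blockSum_sdiff_right A hi (univ \ {i}), blockSum_comm hA (univ \ {i}) {i},
    blockSum_univ hA] at huniv
  have hcard : (#(univ \ {i}) : ℝ) + 1 = m := by
    exact_mod_cast (card_sdiff_add_card_eq_card hi).trans (card_fin m)
  have hrow : blockSum A {i} univ = ∑ j, A i j := sum_singleton _ _
  linarith [blockSum_self_le_card hA (univ \ {i}),
    blockSum_mono_right (apply_nonneg hA) {i} (subset_univ (univ \ {i}))]

lemma quadForm_nonneg (hA : A ∈ U1 m) {x : Fin m → ℝ} (hx : ∀ i, 0 ≤ x i) :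
    0 ≤ quadForm A x :=
  sum_nonneg fun i _ => sum_nonneg fun j _ =>
    mul_nonneg (mul_nonneg (apply_nonneg hA i j) (hx i)) (hx j)

/-- Writing `x = μ 𝟙 + y`, the cross terms contribute `μ ∑ yᵢ (2ρᵢ - 1) ≥ 0`, where the
row sums `ρᵢ` are at least `1/2`. -/
lemma mul_sum_le_quadForm (hA : A ∈ U1 m) {μ : ℝ} {x : Fin m → ℝ} (hμ : 0 ≤ μ)
    (hx : ∀ j, μ ≤ x j) : μ * ∑ j, x j ≤ quadForm A x := by
  set y : Fin m → ℝ := fun j => x j - μ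
  set ρ : Fin m → ℝ := fun i => ∑ j, A i j
  have hy : ∀ j, 0 ≤ y j := fun j => sub_nonneg.2 (hx j)
  have hexpand : quadForm A x = quadForm A y + μ * (∑ i, x i * ρ i + ∑ i, y i * ρ i) := by
    have hsymm : ∑ i, ∑ j, A i j * y j = ∑ i, y i * ρ i := by
      rw [sum_comm]
      simp only [ρ, mul_sum]
      exact sum_congr rfl fun i _ => sum_congr rfl fun j _ => by rw [apply_comm hA j i, mul_comm]
    rw [← hsymm]
    simp only [quadForm, ρ, mul_add, mul_sum, ← sum_add_distrib]
    refine sum_congr rfl fun i _ => sum_congr rfl fun j _ => ?_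
    simp only [y]
    ring
  have hρ : ∑ i, ρ i = ∑ _i : Fin m, (1 : ℝ) := by
    simpa [ρ, blockSum] using blockSum_univ hA
  have hgap : ∑ i, x i * ρ i + ∑ i, y i * ρ i - ∑ i, x i
      = ∑ i, y i * (2 * ρ i - 1) + μ * (∑ i, ρ i - ∑ _i : Fin m, (1 : ℝ)) := by
    simp only [mul_sub, mul_sum, ← sum_add_distrib, ← sum_sub_distrib]
    refine sum_congr rfl fun i _ => ?_
    simp only [y]
    ring
  rw [hρ, sub_self, mul_zero, add_zero] at hgap
  have hcross : 0 ≤ ∑ i, y i * (2 * ρ i - 1) :=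
    sum_nonneg fun i _ => mul_nonneg (hy i) (by linarith [one_le_two_mul_rowSum hA i])
  rw [hexpand]
  nlinarith [quadForm_nonneg hA hy]

end U1

section Majorization

variable {m k : ℕ}

lemma sum_le_maxSum (x : Fin m → ℝ) {s : Finset (Fin m)} (hs : #s = k) :
    ∑ i ∈ s, x i ≤ maxSum m x k :=
  le_csSup ((Set.finite_range fun t : Finset (Fin m) => ∑ i ∈ t, x i).bddAbove.mono
    (by rintro _ ⟨t, -, rfl⟩; exact ⟨t, rfl⟩)) ⟨s, hs, rfl⟩

lemma maxSum_le {x : Fin m → ℝ} {c : ℝ} (hk : k ≤ m)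
    (h : ∀ s : Finset (Fin m), #s = k → ∑ i ∈ s, x i ≤ c) : maxSum m x k ≤ c := by
  obtain ⟨s, -, hs⟩ := exists_subset_card_eq (s := (univ : Finset (Fin m))) (by simpa using hk)
  exact csSup_le ⟨_, s, hs, rfl⟩ (by rintro _ ⟨t, ht, rfl⟩; exact h t ht)

lemma isMajorizedBy_of_sum_le {x y : Fin m → ℝ}
    (h : ∀ k, 1 ≤ k → k ≤ m - 1 → ∀ s : Finset (Fin m), #s = k → ∑ i ∈ s, y i ≤ maxSum m x k) :
    IsMajorizedBy m y x :=
  fun k hk1 hkm => maxSum_le (by omega) (h k hk1 hkm)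

end Majorization

/-- A layer-cake decomposition `x = ∑ r, weight r • 𝟙_{layer r}` along a chain of nested
sets of sizes `1, …, m`; sorting `x` decreasingly, `layer r` is the set of its `r + 1`
largest entries. -/
structure Layering {m : ℕ} (x : Fin m → ℝ) where
  weight : Fin m → ℝ
  layer : Fin m → Finset (Fin m)
  weight_nonneg : ∀ r, 0 ≤ weight r
  monotone_layer : Monotone layer
  card_layer : ∀ r, #(layer r) = (r : ℕ) + 1
  apply_eq : ∀ i, x i = ∑ r with i ∈ layer r, weight r

namespace Layering

variable {m : ℕ} {x : Fin m → ℝ}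

theorem nonempty_of_nonneg (hx : ∀ i, 0 ≤ x i) : Nonempty (Layering x) := by
  set σ := Tuple.sort fun i => -x i
  -- the entries of `x` in decreasing order, followed by zeros
  set y : ℕ → ℝ := fun n => if h : n < m then x (σ ⟨n, h⟩) else 0
  have hy : Antitone y := by
    intro a b hab
    simp only [y]
    split_ifs with hb ha ha
    · simpa using Tuple.monotone_sort (fun i => -x i) (show (⟨a, ha⟩ : Fin m) ≤ ⟨b, hb⟩ from hab)
    · omega
    · exact hx _
    · rfl
  refine ⟨⟨fun r => y r - y (r + 1), fun r => (Iic r).map σ.toEmbedding,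
    fun r => sub_nonneg.2 (hy (Nat.le_succ _)), fun r s h => map_subset_map.2 (Iic_subset_Iic.2 h),
    fun r => by simp, fun i => ?_⟩⟩
  have hfilter : ({r | i ∈ (Iic r).map σ.toEmbedding} : Finset (Fin m)) = Ici (σ.symm i) := by
    ext r
    simp
  have hp : (σ.symm i : ℕ) ≤ m := (σ.symm i).is_lt.le
  have hsum := sum_map (Ici (σ.symm i)) Fin.valEmbedding fun n => y n - y (n + 1)
  simp only [Fin.map_valEmbedding_Ici, Fin.valEmbedding_apply] at hsum
  have htel : ∑ n ∈ Ico (σ.symm i : ℕ) m, (y n - y (n + 1)) = y (σ.symm i) - y m := by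
    rw [← neg_sub (y m), ← sum_Ico_sub y hp, ← sum_neg_distrib]
    simp only [neg_sub]
  rw [hfilter, ← hsum, htel]
  simp [y]

variable (L : Layering x)

lemma sum_mul_eq (f : Fin m → ℝ) : ∑ i, f i * x i = ∑ r, L.weight r * ∑ i ∈ L.layer r, f i := by
  simp only [L.apply_eq, sum_filter, mul_sum]
  rw [sum_comm]
  refine sum_congr rfl fun r _ => ?_
  simp only [mul_ite, mul_zero, sum_ite_mem, univ_inter, mul_comm]

lemma sum_eq (γ : Finset (Fin m)) : ∑ i ∈ γ, x i = ∑ r, L.weight r * #(γ ∩ L.layer r) := by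
  simp only [L.apply_eq, sum_filter]
  rw [sum_comm]
  refine sum_congr rfl fun r _ => ?_
  rw [sum_ite_mem, sum_const, nsmul_eq_mul, mul_comm]

lemma card_inter_layer (q r : Fin m) :
    #(L.layer q ∩ L.layer r) = min ((q : ℕ) + 1) ((r : ℕ) + 1) := by
  rcases le_total q r with h | h
  · rw [inter_eq_left.2 (L.monotone_layer h), L.card_layer, min_eq_left (by omega)]
  · rw [inter_eq_right.2 (L.monotone_layer h), L.card_layer, min_eq_right (by omega)]

lemma quadForm_eq (M : Matrix (Fin m) (Fin m) ℝ) :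
    quadForm M x = ∑ r, ∑ s, L.weight r * L.weight s * blockSum M (L.layer r) (L.layer s) := by
  calc quadForm M x = ∑ i, (∑ j, M i j * x j) * x i := by
        simp only [quadForm, sum_mul]
        exact sum_congr rfl fun i _ => sum_congr rfl fun j _ => by ring
    _ = ∑ r, L.weight r * ∑ j, (∑ i ∈ L.layer r, M i j) * x j := by
        rw [L.sum_mul_eq]
        simp only [sum_mul]
        exact sum_congr rfl fun r _ => by rw [sum_comm]
    _ = ∑ r, ∑ s, L.weight r * L.weight s * blockSum M (L.layer r) (L.layer s) := by
        simp only [L.sum_mul_eq, mul_sum, blockSum, mul_assoc]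
        exact sum_congr rfl fun r _ => sum_congr rfl fun s _ => by rw [sum_comm]

lemma sum_weight_mul_card : ∑ r : Fin m, L.weight r * ((r : ℕ) + 1 : ℝ) = ∑ i, x i := by
  simp [L.sum_eq univ, L.card_layer]

lemma sum_weight_mul_min_le_maxSum {k : ℕ} (hk : 1 ≤ k) (hkm : k ≤ m) :
    ∑ r : Fin m, L.weight r * min (k : ℝ) ((r : ℕ) + 1) ≤ maxSum m x k := by
  set q : Fin m := ⟨k - 1, by omega⟩
  have hq : (q : ℕ) + 1 = k := by simp [q]; omega
  calc ∑ r : Fin m, L.weight r * min (k : ℝ) ((r : ℕ) + 1)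
      = ∑ i ∈ L.layer q, x i := by
        rw [L.sum_eq]
        refine sum_congr rfl fun r _ => ?_
        rw [L.card_inter_layer, hq]
        push_cast
        rfl
    _ ≤ maxSum m x k := sum_le_maxSum x (by rw [L.card_layer, hq])

end Layering

lemma cast_le_sub_one_of_lt {k m : ℕ} (h : k < m) : (k : ℝ) ≤ m - 1 := by
  rw [le_sub_iff_add_le]
  exact_mod_cast h

lemma sum_sum_mul_mul_nonneg {ι : Type*} [Fintype ι] {d : ι → ℝ} (hd : ∀ r, 0 ≤ d r)
    {F : ι → ι → ℝ} (hF : ∀ r s, 0 ≤ F r s + F s r) : 0 ≤ ∑ r, ∑ s, d r * d s * F r s := by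
  have hsymm : 2 * ∑ r, ∑ s, d r * d s * F r s = ∑ r, ∑ s, d r * d s * (F r s + F s r) := by
    rw [two_mul]
    nth_rewrite 2 [sum_comm]
    simp only [← sum_add_distrib]
    exact sum_congr rfl fun r _ => sum_congr rfl fun s _ => by ring
  have : 0 ≤ ∑ r, ∑ s, d r * d s * (F r s + F s r) :=
    sum_nonneg fun r _ => sum_nonneg fun s _ => mul_nonneg (mul_nonneg (hd r) (hd s)) (hF r s)
  linarith

lemma two_mul_add_le_of_block_bounds {M K R S C : ℝ} (hK : 1 ≤ K) (hKM : K ≤ M - 1)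
    (hR : 1 ≤ R) (hRS : R ≤ S) (hSM : S ≤ M) (hCRS : C ≤ R * S)
    (hC2 : 2 * C ≤ R + S) :
    2 * (M - K) * C + 2 * (K - 1) * (R * S) ≤ (M - 1) * (min K R * S + min K S * R) := by
  have hMK : 0 ≤ M - K := by linarith
  rcases le_total K R with hKR | hRK
  · rw [min_eq_left hKR, min_eq_left (hKR.trans hRS)]
    nlinarith [mul_le_mul_of_nonneg_left hC2 hMK,
      mul_nonneg (mul_nonneg (sub_nonneg.2 hK) (by linarith : 0 ≤ R)) (sub_nonneg.2 hSM),
      mul_nonneg (mul_nonneg (sub_nonneg.2 hK) (by linarith : 0 ≤ S)) (by linarith : 0 ≤ M - R)]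
  rcases le_total K S with hKS | hSK
  · rw [min_eq_right hRK, min_eq_left hKS]
    nlinarith [mul_le_mul_of_nonneg_left hC2 hMK,
      mul_nonneg (sub_nonneg.2 hR) (add_nonneg
        (mul_nonneg (sub_nonneg.2 hK) (sub_nonneg.2 hSM)) (mul_nonneg (by linarith : 0 ≤ S) hMK)),
      mul_nonneg (sub_nonneg.2 hK) (sub_nonneg.2 hSM)]
  · rw [min_eq_right hRK, min_eq_right hSK]
    nlinarith [mul_le_mul_of_nonneg_left hCRS hMK]

lemma mul_le_sub_one_mul_min {M K R R' : ℝ} (hK : 0 ≤ K) (hKM : K ≤ M - 1) (hR' : 0 ≤ R')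
    (hR'M : R' ≤ M - 1) (hR'R : R' ≤ R) : K * R' ≤ (M - 1) * min K R := by
  rcases le_total K R with hKR | hRK
  · rw [min_eq_left hKR]
    nlinarith
  · rw [min_eq_right hRK]
    nlinarith

namespace U1

variable {m k : ℕ} {A : Matrix (Fin m) (Fin m) ℝ} {x : Fin m → ℝ}

theorem sub_mul_quadForm_add_le (hA : A ∈ U1 m) (hx : x ∈ stdSimplex ℝ (Fin m)) (hk : 1 ≤ k)
    (hkm : k ≤ m - 1) : (m - k) * quadForm A x + (k - 1) ≤ (m - 1) * maxSum m x k := by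
  obtain ⟨L⟩ := Layering.nonempty_of_nonneg hx.1
  set w := L.weight
  set R : Fin m → ℝ := fun r => (r : ℕ) + 1
  set C : Fin m → Fin m → ℝ := fun r s => blockSum A (L.layer r) (L.layer s)
  set F : Fin m → Fin m → ℝ := fun r s =>
    (m - 1) * min (k : ℝ) (R r) * R s - (m - k) * C r s - (k - 1) * (R r * R s)
  have hcard : ∀ r, (#(L.layer r) : ℝ) = R r := fun r => by simp [R, L.card_layer]
  have hK : (1 : ℝ) ≤ k := by exact_mod_cast hk
  have hKM : (k : ℝ) ≤ m - 1 := cast_le_sub_one_of_lt (by omega)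
  have hFle : ∀ r s, r ≤ s → 0 ≤ F r s + F s r := by
    intro r s hrs
    have hC2 := two_mul_blockSum_le hA (L.monotone_layer hrs)
    have hCRS := blockSum_le_card_mul hA (L.layer r) (L.layer s)
    rw [hcard, hcard] at hC2 hCRS
    have hRS : R r ≤ R s := by simp only [R]; exact_mod_cast Nat.succ_le_succ hrs
    have hSM : R s ≤ m := by simp only [R]; exact_mod_cast s.isLt
    have hR : 1 ≤ R r := by simp [R]
    have := two_mul_add_le_of_block_bounds hK hKM hR hRS hSM hCRS hC2
    simp only [F, C] at this ⊢
    rw [blockSum_comm hA (L.layer s)]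
    linarith
  have hF : ∀ r s, 0 ≤ F r s + F s r := fun r s =>
    (le_total r s).elim (hFle r s) fun h => by linarith [hFle s r h]
  have hexpand : (m - 1) * ((∑ r, w r * min (k : ℝ) (R r)) * ∑ s, w s * R s)
      - ((m - k) * ∑ r, ∑ s, w r * w s * C r s + (k - 1) * ((∑ r, w r * R r) * ∑ s, w s * R s))
      = ∑ r, ∑ s, w r * w s * F r s := by
    rw [sum_mul_sum, sum_mul_sum]
    simp only [mul_sum, ← sum_add_distrib, ← sum_sub_distrib]
    exact sum_congr rfl fun r _ => sum_congr rfl fun s _ => by ring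
  have hR1 : ∑ r, w r * R r = 1 := L.sum_weight_mul_card.trans hx.2
  rw [hR1, mul_one, mul_one, ← L.quadForm_eq] at hexpand
  nlinarith [sum_sum_mul_mul_nonneg L.weight_nonneg hF,
    L.sum_weight_mul_min_le_maxSum hk (by omega)]

theorem mul_one_sub_quadForm_le (hA : A ∈ U1 m) (hx : x ∈ stdSimplex ℝ (Fin m)) (hk : 1 ≤ k)
    (hkm : k ≤ m - 1) : k * (1 - quadForm A x) ≤ (m - 1) * maxSum m x k := by
  obtain ⟨L⟩ := Layering.nonempty_of_nonneg hx.1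
  set w := L.weight
  set R : Fin m → ℝ := fun r => (r : ℕ) + 1
  set top : Fin m := ⟨m - 1, by omega⟩
  have htop : L.layer top = univ := eq_univ_of_card _ (by simp [L.card_layer, top]; omega)
  have hmin : ∀ j, w top ≤ x j := fun j => by
    rw [L.apply_eq j]
    exact single_le_sum (fun r _ => L.weight_nonneg r) (by simp [htop])
  have hquad := mul_sum_le_quadForm hA (L.weight_nonneg top) hmin
  rw [hx.2, mul_one] at hquad
  have hKM : (k : ℝ) ≤ m - 1 := cast_le_sub_one_of_lt (by omega)
  have hterm : ∀ r, k * (R r - if r = top then 1 else 0) ≤ (m - 1) * min (k : ℝ) (R r) := by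
    intro r
    refine mul_le_sub_one_mul_min (Nat.cast_nonneg k) hKM ?_ ?_ (by split_ifs <;> simp)
    · have := (r : ℕ).cast_nonneg (α := ℝ)
      split_ifs <;> simp only [R] <;> linarith
    · split_ifs with hr
      · simp [R, hr, top, Nat.cast_sub (by omega : 1 ≤ m)]
      · have : (r : ℕ) ≠ m - 1 := fun h => hr (Fin.ext h)
        simpa [R] using cast_le_sub_one_of_lt (by omega : (r : ℕ) + 1 < m)
  have hR1 : ∑ r, w r * R r = 1 := L.sum_weight_mul_card.trans hx.2
  have hsplit : k * (1 - w top) = ∑ r, w r * (k * (R r - if r = top then 1 else 0)) := by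
    have hterm' : ∀ r, w r * (k * (R r - if r = top then 1 else 0))
        = k * (w r * R r) - if r = top then k * w r else 0 := fun r => by split_ifs <;> ring
    simp only [hterm', sum_sub_distrib, ← mul_sum, hR1, sum_ite_eq', mem_univ, if_true]
    ring
  calc (k : ℝ) * (1 - quadForm A x) ≤ k * (1 - w top) := by gcongr
    _ = ∑ r, w r * (k * (R r - if r = top then 1 else 0)) := hsplit
    _ ≤ ∑ r, w r * ((m - 1) * min (k : ℝ) (R r)) :=
        sum_le_sum fun r _ => mul_le_mul_of_nonneg_left (hterm r) (L.weight_nonneg r)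
    _ = (m - 1) * ∑ r, w r * min (k : ℝ) (R r) := by
        rw [mul_sum]; exact sum_congr rfl fun r _ => by ring
    _ ≤ (m - 1) * maxSum m x k := by
        gcongr
        · linarith
        · exact L.sum_weight_mul_min_le_maxSum hk (by omega)

end U1

lemma qsoCoeffs_of_mem_U1 {m : ℕ} {A : Fin m → Matrix (Fin m) (Fin m) ℝ} (hA : ∀ l, A l ∈ U1 m)
    (hsum : ∑ l, A l = Ematrix m) : QSOCoeffs m fun i j k => A k i j :=
  ⟨fun i j k => U1.apply_comm (hA k) i j, fun i j k => U1.apply_nonneg (hA k) i j,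
    fun i j => by simpa [Matrix.sum_apply, Ematrix] using congrFun (congrFun hsum i) j⟩

section DsqoFamily

variable {m : ℕ} {A : Matrix (Fin m) (Fin m) ℝ}

noncomputable def residualMatrix (A : Matrix (Fin m) (Fin m) ℝ) : Matrix (Fin m) (Fin m) ℝ :=
  ((m : ℝ) - 1)⁻¹ • (Ematrix m - A)

lemma blockSum_residualMatrix (A : Matrix (Fin m) (Fin m) ℝ) (α β : Finset (Fin m)) :
    blockSum (residualMatrix A) α β = ((m : ℝ) - 1)⁻¹ * (#α * #β - blockSum A α β) := by
  rw [residualMatrix, blockSum_smul, blockSum_sub, Ematrix, blockSum_of_one]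

lemma quadForm_residualMatrix (A : Matrix (Fin m) (Fin m) ℝ) (x : Fin m → ℝ) :
    quadForm (residualMatrix A) x = ((m : ℝ) - 1)⁻¹ * ((∑ i, x i) ^ 2 - quadForm A x) := by
  rw [residualMatrix, quadForm_smul, quadForm_sub, Ematrix, quadForm_of_one]

lemma residualMatrix_mem_U1 (hm : 2 ≤ m) (hA : A ∈ U1 m) : residualMatrix A ∈ U1 m := by
  have hm1 : (0 : ℝ) < m - 1 := by
    rw [sub_pos]; exact_mod_cast hm
  refine ⟨Matrix.IsSymm.ext fun i j => ?_, fun i j => ?_, fun β => ?_, ?_⟩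
  · simp [residualMatrix, Ematrix, U1.apply_comm hA i j]
  · simpa [residualMatrix, Ematrix] using
      mul_nonneg (inv_nonneg.2 hm1.le) (sub_nonneg.2 (U1.apply_le_one hA i j))
  · change blockSum _ β β ≤ _
    rw [blockSum_residualMatrix, inv_mul_le_iff₀ hm1]
    rcases (card_le_univ β).lt_or_eq with hlt | heq
    · have hβ : (#β : ℝ) ≤ m - 1 := cast_le_sub_one_of_lt (by simpa using hlt)
      nlinarith [U1.blockSum_nonneg hA β β, (#β).cast_nonneg (α := ℝ)]
    · rw [eq_univ_of_card β heq, U1.blockSum_univ hA]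
      simp only [card_univ, Fintype.card_fin]
      exact le_of_eq (by ring)
  · change blockSum _ univ univ = _
    rw [blockSum_residualMatrix, U1.blockSum_univ hA]
    simp only [card_univ, Fintype.card_fin]
    field_simp

variable [NeZero m]

noncomputable def dsqoFamily (A : Matrix (Fin m) (Fin m) ℝ) (l : Fin m) :
    Matrix (Fin m) (Fin m) ℝ :=
  if l = 0 then A else residualMatrix A

lemma dsqoFamily_zero (A : Matrix (Fin m) (Fin m) ℝ) : dsqoFamily A 0 = A :=
  if_pos rfl

lemma dsqoFamily_of_ne_zero (A : Matrix (Fin m) (Fin m) ℝ) {l : Fin m} (hl : l ≠ 0) :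
    dsqoFamily A l = residualMatrix A :=
  if_neg hl

lemma dsqoFamily_mem_U1 (hA : A ∈ U1 m) (l : Fin m) : dsqoFamily A l ∈ U1 m := by
  obtain rfl | hl := eq_or_ne l 0
  · rwa [dsqoFamily_zero]
  · have : (l : ℕ) ≠ 0 := by rwa [Ne, ← Fin.val_eq_val, Fin.val_zero] at hl
    exact dsqoFamily_of_ne_zero A hl ▸ residualMatrix_mem_U1 (by omega) hA

lemma sum_dsqoFamily_of_mem {β : Finset (Fin m)} (h0 : 0 ∈ β) :
    ∑ l ∈ β, dsqoFamily A l = A + (#β - 1) • residualMatrix A := by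
  rw [← add_sum_erase β _ h0, dsqoFamily_zero,
    sum_congr rfl fun l hl => dsqoFamily_of_ne_zero A (ne_of_mem_erase hl), sum_const,
    card_erase_of_mem h0]

lemma sum_dsqoFamily_of_notMem {β : Finset (Fin m)} (h0 : 0 ∉ β) :
    ∑ l ∈ β, dsqoFamily A l = #β • residualMatrix A := by
  rw [sum_congr rfl fun l hl => dsqoFamily_of_ne_zero A (ne_of_mem_of_not_mem hl h0), sum_const]

lemma sum_dsqoFamily (hA : A ∈ U1 m) : ∑ l, dsqoFamily A l = Ematrix m := by
  rw [sum_dsqoFamily_of_mem (mem_univ 0), card_univ, Fintype.card_fin]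
  rcases (NeZero.one_le : 1 ≤ m).eq_or_lt with rfl | hm
  · ext i j
    fin_cases i; fin_cases j
    simpa [blockSum, Ematrix] using U1.blockSum_univ hA
  · rw [← Nat.cast_smul_eq_nsmul ℝ, residualMatrix, smul_smul, Nat.cast_sub hm.le, Nat.cast_one,
      mul_inv_cancel₀ (sub_ne_zero.2 (by exact_mod_cast hm.ne')), one_smul, add_sub_cancel]

lemma sum_quadForm_dsqoFamily_le (hA : A ∈ U1 m) {x : Fin m → ℝ} (hx : x ∈ stdSimplex ℝ (Fin m))
    {k : ℕ} (hk : 1 ≤ k) (hkm : k ≤ m - 1) {β : Finset (Fin m)} (hβ : #β = k) :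
    ∑ l ∈ β, quadForm (dsqoFamily A l) x ≤ maxSum m x k := by
  have hm1 : (0 : ℝ) < m - 1 := by
    rw [sub_pos]; exact_mod_cast (by omega : 1 < m)
  rw [← quadForm_sum]
  by_cases h0 : 0 ∈ β
  · rw [sum_dsqoFamily_of_mem h0, quadForm_add, ← Nat.cast_smul_eq_nsmul ℝ, quadForm_smul,
      quadForm_residualMatrix, hx.2, hβ, Nat.cast_sub hk]
    have hcore := U1.sub_mul_quadForm_add_le hA hx hk hkm
    have hlhs : quadForm A x + ((k : ℝ) - 1) * (((m : ℝ) - 1)⁻¹ * (1 ^ 2 - quadForm A x))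
        = ((m - k) * quadForm A x + (k - 1)) / (m - 1) := by
      field_simp
      ring
    rw [Nat.cast_one, hlhs, div_le_iff₀ hm1]
    linarith
  · rw [sum_dsqoFamily_of_notMem h0, ← Nat.cast_smul_eq_nsmul ℝ, quadForm_smul,
      quadForm_residualMatrix, hx.2, hβ, one_pow, ← mul_assoc, ← div_eq_mul_inv, div_mul_eq_mul_div,
      div_le_iff₀ hm1]
    linarith [U1.mul_one_sub_quadForm_le hA hx hk hkm]

lemma isDSQO_dsqoFamily (hA : A ∈ U1 m) : IsDSQO m fun i j k => dsqoFamily A k i j :=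
  ⟨qsoCoeffs_of_mem_U1 (dsqoFamily_mem_U1 hA) (sum_dsqoFamily hA), fun _ hx =>
    isMajorizedBy_of_sum_le fun _ hk hkm _ hβ => sum_quadForm_dsqoFamily_le hA hx hk hkm hβ⟩

end DsqoFamily

/-- Any `A₁ ∈ U_1` can be completed to a family `A₁, …, A_m ∈ U_1` summing to `E`
whose associated quadratic stochastic operator is doubly stochastic. -/
theorem extend_to_dsqo (m : ℕ) [NeZero m] (A₁ : Matrix (Fin m) (Fin m) ℝ)
    (hA₁ : A₁ ∈ U1 m) :
    ∃ A : Fin m → Matrix (Fin m) (Fin m) ℝ,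
      A 0 = A₁ ∧ (∀ k, A k ∈ U1 m) ∧ (∑ k, A k) = Ematrix m ∧
        IsDSQO m (fun i j k => A k i j) :=
  ⟨dsqoFamily A₁, dsqoFamily_zero A₁, dsqoFamily_mem_U1 hA₁, sum_dsqoFamily hA₁,
    isDSQO_dsqoFamily hA₁⟩
end

section
/- Let V = (A₁|A₂|...|A_m) ∈ B. If at least m−1 of the coefficient matrices A₁, ..., A_m are extreme points of U_1 (i.e., there exists an index i₀ such that A_i ∈ extr U_1 for all i ≠ i₀), then V is an extreme point of B. -/
/-- Extreme point of a set: cannot be a midpoint of two distinct points of the set. -/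
def IsExtremePt {X : Type*} [AddCommGroup X] [Module ℝ X] (C : Set X) (x : X) : Prop :=
  x ∈ C ∧ ∀ y ∈ C, ∀ z ∈ C, x = (1 / 2 : ℝ) • (y + z) → y = z

/-- The set of coefficient tensors of doubly stochastic quadratic operators. -/
def Bset (m : ℕ) : Set (Fin m → Fin m → Fin m → ℝ) := {p | IsDSQO m p}

/-!
Every coefficient matrix `A_k` of a d.s.q.o. lies in `U_1`: testing `V x ≺ x` at the largest
entry with `x` uniform on a set `α` bounds the block sum of `A_k` over `α` by `|α|`, and since
the `m` total sums of the `A_k` add up to `m²`, each of them is exactly `m`. Hence if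
`p = (q + r) / 2` in `B`, each `A_k(p)` with `k ≠ i₀` is the midpoint of `A_k(q), A_k(r) ∈ U_1`,
so `A_k(q) = A_k(r)`; the remaining slice `k = i₀` is then fixed by `∑ₖ p_{ij,k} = 1`.
-/

open Finset

lemma bddAbove_maxSum_set (m k : ℕ) (x : Fin m → ℝ) :
    BddAbove {r : ℝ | ∃ s : Finset (Fin m), s.card = k ∧ r = ∑ i ∈ s, x i} := by
  refine (Set.finite_range fun s : Finset (Fin m) => ∑ i ∈ s, x i).subset ?_ |>.bddAbove
  rintro r ⟨s, -, rfl⟩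
  exact ⟨s, rfl⟩

lemma le_maxSum_one {m : ℕ} (x : Fin m → ℝ) (i : Fin m) : x i ≤ maxSum m x 1 :=
  le_csSup (bddAbove_maxSum_set m 1 x) ⟨{i}, by simp⟩

lemma maxSum_one_le {m : ℕ} (hm : 0 < m) {x : Fin m → ℝ} {c : ℝ} (hc : ∀ i, x i ≤ c) :
    maxSum m x 1 ≤ c := by
  refine csSup_le ⟨x ⟨0, hm⟩, {⟨0, hm⟩}, by simp⟩ ?_
  rintro r ⟨s, hs, rfl⟩
  obtain ⟨i, rfl⟩ := card_eq_one.mp hs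
  simpa using hc i

lemma IsMajorizedBy.le_of_forall_le {m : ℕ} (hm : 2 ≤ m) {x y : Fin m → ℝ}
    (h : IsMajorizedBy m y x) {c : ℝ} (hc : ∀ i, x i ≤ c) (k : Fin m) : y k ≤ c :=
  (le_maxSum_one y k).trans <| (h 1 le_rfl (by omega)).trans (maxSum_one_le (by omega) hc)

lemma indicator_mem_stdSimplex {m : ℕ} {α : Finset (Fin m)} (hα : α.Nonempty) :
    (fun i => if i ∈ α then (α.card : ℝ)⁻¹ else 0) ∈ stdSimplex ℝ (Fin m) := by
  refine ⟨fun i => by dsimp only; split_ifs <;> positivity, ?_⟩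
  rw [sum_ite_mem, univ_inter, sum_const, nsmul_eq_mul]
  exact mul_inv_cancel₀ (by exact_mod_cast hα.card_pos.ne')

lemma QSOMap_indicator {m : ℕ} (p : Fin m → Fin m → Fin m → ℝ) (α : Finset (Fin m)) (c : ℝ)
    (k : Fin m) :
    QSOMap m p (fun i => if i ∈ α then c else 0) k = (∑ i ∈ α, ∑ j ∈ α, p i j k) * c ^ 2 := by
  simp only [QSOMap, mul_ite, mul_zero, ite_mul, zero_mul, sum_ite_irrel, sum_const_zero,
    sum_ite_mem, univ_inter, sum_mul]
  refine sum_congr rfl fun i _ => sum_congr rfl fun j _ => by ring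

section DSQO

variable {m : ℕ} {p : Fin m → Fin m → Fin m → ℝ}

lemma IsDSQO.blockSum_le_card (hm : 2 ≤ m) (hp : IsDSQO m p) (α : Finset (Fin m)) (k : Fin m) :
    ∑ i ∈ α, ∑ j ∈ α, p i j k ≤ α.card := by
  rcases α.eq_empty_or_nonempty with rfl | hα
  · simp
  have hN : (0 : ℝ) < α.card := by exact_mod_cast hα.card_pos
  have hx := indicator_mem_stdSimplex hα
  have hle := (hp.2 _ hx).le_of_forall_le hm
    (fun i => by split_ifs; exacts [le_rfl, by positivity]) k
  rwa [QSOMap_indicator, inv_pow, ← div_eq_mul_inv, div_le_iff₀ (by positivity), sq,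
    ← mul_assoc, inv_mul_cancel₀ hN.ne', one_mul] at hle

lemma IsDSQO.totalSum_eq (hm : 2 ≤ m) (hp : IsDSQO m p) (k : Fin m) :
    ∑ i, ∑ j, p i j k = m := by
  have hle : ∀ k ∈ (univ : Finset (Fin m)), ∑ i, ∑ j, p i j k ≤ m := fun k _ => by
    simpa using hp.blockSum_le_card hm univ k
  have htotal : ∑ k, ∑ i, ∑ j, p i j k = ∑ _k : Fin m, (m : ℝ) :=
    calc ∑ k, ∑ i, ∑ j, p i j k = ∑ i, ∑ j, ∑ k, p i j k := by
          rw [sum_comm]; exact sum_congr rfl fun i _ => sum_comm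
      _ = ∑ _k : Fin m, (m : ℝ) := by simp [hp.1.2.2]
  exact (sum_eq_sum_iff_of_le hle).1 htotal k (mem_univ k)

lemma IsDSQO.coeffMatrix_mem_U1 (hm : 2 ≤ m) (hp : IsDSQO m p) (k : Fin m) :
    (Matrix.of fun a b => p a b k) ∈ U1 m :=
  ⟨Matrix.IsSymm.ext fun i j => hp.1.1 j i k, fun i j => hp.1.2.1 i j k,
    fun α => hp.blockSum_le_card hm α k, hp.totalSum_eq hm k⟩

end DSQO

lemma eq_of_sum_eq_of_eq_of_ne {ι G : Type*} [Fintype ι] [AddCommGroup G] {f g : ι → G}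
    (hsum : ∑ i, f i = ∑ i, g i) (i₀ : ι) (h : ∀ i, i ≠ i₀ → f i = g i) : f = g := by
  classical
  funext i
  by_cases hi : i = i₀
  · subst hi
    have herase : ∑ j ∈ univ.erase i, f j = ∑ j ∈ univ.erase i, g j :=
      sum_congr rfl fun j hj => h j (ne_of_mem_erase hj)
    rw [sum_erase_eq_sub (mem_univ i), sum_erase_eq_sub (mem_univ i), hsum] at herase
    exact sub_right_injective herase
  · exact h i hi

/-- If at least `m - 1` of the coefficient matrices of a doubly stochastic quadratic
operator are extreme points of `U_1`, then the operator is an extreme point of `B`. -/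
theorem extreme_Bset_of_extreme_matrices (m : ℕ) (p : Fin m → Fin m → Fin m → ℝ)
    (hp : p ∈ Bset m) (i₀ : Fin m)
    (h : ∀ i : Fin m, i ≠ i₀ → IsExtremePt (U1 m) (Matrix.of fun a b => p a b i)) :
    IsExtremePt (Bset m) p := by
  refine ⟨hp, fun q hq r hr hpqr => funext₂ fun a b => ?_⟩
  refine eq_of_sum_eq_of_eq_of_ne ((hq.1.2.2 a b).trans (hr.1.2.2 a b).symm) i₀ fun k hk => ?_
  have hm : 2 ≤ m := Fin.nontrivial_iff_two_le.1 ⟨⟨k, i₀, hk⟩⟩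
  have hmid : (Matrix.of fun a b => p a b k)
      = (1 / 2 : ℝ) • ((Matrix.of fun a b => q a b k) + Matrix.of fun a b => r a b k) := by
    ext a b
    simp [hpqr, mul_add]
  have := (h k hk).2 _ (hq.coeffMatrix_mem_U1 hm k) _ (hr.coeffMatrix_mem_U1 hm k) hmid
  exact congrFun₂ this a b
end
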